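/- arXiv:1603.04809 — 5 statements merged into one kernel-verified Lean document; each statement's English description precedes it below -/
import Mathlib

section
/- Let L ≥ 2 and j ∈ ℕ₀. There exists a constant C > 0, independent of j and x, such that |K^L_{π,j}(x)| ≤ C · min{ 1/(2^j|x|)^L , 1 } for all x ∈ [-π, π] with x ≠ 0, and consequently |K^L_{π,j}(x)| ≤ C* (1 + 2^j|x|)^{-L} for some constant C* > 0. -/
open Real Finset

/-- The normalized `sinc` function: `sin x / x` for `x ≠ 0`, and `1` at `0`. -/
noncomputable def sinc (x : ℝ) : ℝ := if x = 0 then 1 else Real.sin x / x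

/-- The kernel `K^L(x) = ∏_{ℓ=1}^L sinc(2^{-ℓ} x)`. -/
noncomputable def KL (L : ℕ) (x : ℝ) : ℝ := ∏ l ∈ Finset.Icc 1 L, _root_.sinc (x / 2 ^ l)

/-- The `2π`-periodization of `K^L(2^j ·)`. -/
noncomputable def KLper (L j : ℕ) (x : ℝ) : ℝ := ∑' k : ℤ, KL L (2 ^ j * (x + 2 * Real.pi * k))

/-!
Each factor satisfies `|sinc (y / 2^l)| ≤ 2^l / max 1 |y|`, so `|K^L(y)| ≤ (2^L / max 1 |y|)^L`.
For `|x| ≤ π` and `k ≠ 0` the point `x + 2πk` lies at distance at least `π |k|` from the origin,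
hence `max 1 |2^j (x + 2πk)| ≥ max 1 (2^j |x|) · max 1 |k|`. Summing over `k` gives
`|KLper L j x| ≤ C / max 1 (2^j |x|)^L` with `C` a multiple of `∑ₖ max 1 |k| ^ (-L)`,
which is finite because `L ≥ 2`. Both estimates follow, since `1 / max 1 t ^ L ≤ min (1 / t ^ L) 1`
and `1 + t ≤ 2 max 1 t`.
-/

theorem sinc_eq_real_sinc : _root_.sinc = Real.sinc := rfl

theorem abs_sinc_le_one_div_max (x : ℝ) : |_root_.sinc x| ≤ 1 / max 1 |x| := by
  rw [sinc_eq_real_sinc]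
  rcases le_total |x| 1 with hx | hx
  · rw [max_eq_left hx, div_one]
    exact Real.abs_sinc_le_one x
  · have hx0 : x ≠ 0 := by rintro rfl; norm_num at hx
    rw [max_eq_right hx, Real.sinc_of_ne_zero hx0, abs_div]
    gcongr
    exact Real.abs_sin_le_one x

theorem abs_sinc_div_le {c : ℝ} (hc : 1 ≤ c) (y : ℝ) :
    |_root_.sinc (y / c)| ≤ c / max 1 |y| := by
  have hc0 : 0 < c := zero_lt_one.trans_le hc
  have hmax : max 1 |y| ≤ c * max 1 |y / c| := by
    rw [abs_div, abs_of_pos hc0, mul_max_of_nonneg _ _ hc0.le, mul_div_cancel₀ _ hc0.ne', mul_one]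
    exact max_le_max hc le_rfl
  calc |_root_.sinc (y / c)| ≤ 1 / max 1 |y / c| := abs_sinc_le_one_div_max _
    _ ≤ c / max 1 |y| := by
      rw [div_le_div_iff₀ (by positivity) (by positivity), one_mul]
      exact hmax

theorem abs_KL_le (L : ℕ) (y : ℝ) : |KL L y| ≤ (2 ^ L / max 1 |y|) ^ L := by
  rw [KL, Finset.abs_prod]
  calc ∏ l ∈ Finset.Icc 1 L, |_root_.sinc (y / 2 ^ l)|
      ≤ ∏ _l ∈ Finset.Icc 1 L, (2 : ℝ) ^ L / max 1 |y| := by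
        refine Finset.prod_le_prod (fun _ _ => abs_nonneg _) fun l hl => ?_
        have hlL : l ≤ L := (Finset.mem_Icc.mp hl).2
        refine (abs_sinc_div_le (one_le_pow₀ one_le_two) y).trans ?_
        gcongr
        exact one_le_two
    _ = (2 ^ L / max 1 |y|) ^ L := by rw [Finset.prod_const, Nat.card_Icc, Nat.add_sub_cancel]

theorem max_one_mul_max_one_abs_int_le {s x : ℝ} (hs : 1 ≤ s) (hx : |x| ≤ π) (k : ℤ) :
    max 1 (s * |x|) * max 1 |(k : ℝ)| ≤ max 1 |s * (x + 2 * π * k)| := by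
  rcases eq_or_ne k 0 with rfl | hk
  · simp [abs_mul, abs_of_pos (zero_lt_one.trans_le hs)]
  have hk1 : 1 ≤ |(k : ℝ)| := by rw [← Int.cast_abs]; exact_mod_cast Int.one_le_abs hk
  have hs0 : 0 ≤ s := zero_le_one.trans hs
  have hdist : π * |(k : ℝ)| ≤ |x + 2 * π * k| := by
    have h := abs_sub_abs_le_abs_sub (2 * π * k) (-x)
    rw [abs_neg, sub_neg_eq_add, add_comm, abs_mul, abs_of_pos (by positivity : 0 < 2 * π)] at h
    have hπk : π ≤ π * |(k : ℝ)| := le_mul_of_one_le_right pi_pos.le hk1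
    linarith
  have hscale : max 1 (s * |x|) ≤ s * π := max_le (by nlinarith [Real.pi_gt_three]) (by gcongr)
  rw [max_eq_right hk1, abs_mul, abs_of_nonneg hs0]
  calc max 1 (s * |x|) * |(k : ℝ)| ≤ s * π * |(k : ℝ)| := by gcongr
    _ ≤ s * |x + 2 * π * k| := by rw [mul_assoc]; gcongr
    _ ≤ max 1 (s * |x + 2 * π * k|) := le_max_right _ _

theorem summable_one_div_max_one_abs_int_pow {L : ℕ} (hL : 2 ≤ L) :
    Summable fun k : ℤ => 1 / max 1 |(k : ℝ)| ^ L := by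
  refine (summable_one_div_int_pow.mpr hL).abs.of_norm_bounded_eventually ?_
  filter_upwards [(Set.finite_singleton (0 : ℤ)).compl_mem_cofinite] with k hk
  have hk1 : 1 ≤ |(k : ℝ)| := by rw [← Int.cast_abs]; exact_mod_cast Int.one_le_abs hk
  rw [max_eq_right hk1, Real.norm_of_nonneg (by positivity), abs_div, abs_one, abs_pow]

theorem abs_KL_periodized_le (L j : ℕ) {x : ℝ} (hx : |x| ≤ π) (k : ℤ) :
    |KL L (2 ^ j * (x + 2 * π * k))| ≤
      (2 ^ L) ^ L * (1 / max 1 |(k : ℝ)| ^ L) / max 1 (2 ^ j * |x|) ^ L := by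
  refine (abs_KL_le L _).trans ?_
  have hgeom := max_one_mul_max_one_abs_int_le (s := 2 ^ j) (one_le_pow₀ one_le_two) hx k
  calc ((2 : ℝ) ^ L / max 1 |2 ^ j * (x + 2 * π * k)|) ^ L
      ≤ (2 ^ L / (max 1 (2 ^ j * |x|) * max 1 |(k : ℝ)|)) ^ L := by gcongr
    _ = (2 ^ L) ^ L * (1 / max 1 |(k : ℝ)| ^ L) / max 1 (2 ^ j * |x|) ^ L := by
      rw [div_pow, mul_pow]; ring

theorem abs_KLper_le {L : ℕ} (hL : 2 ≤ L) (j : ℕ) {x : ℝ} (hx : |x| ≤ π) :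
    |KLper L j x| ≤
      (2 ^ L) ^ L * (∑' k : ℤ, 1 / max 1 |(k : ℝ)| ^ L) / max 1 (2 ^ j * |x|) ^ L :=
  (Real.norm_eq_abs _).symm.trans_le <| tsum_of_norm_bounded
    (((summable_one_div_max_one_abs_int_pow hL).hasSum.mul_left _).div_const _)
    (abs_KL_periodized_le L j hx)

theorem one_div_max_one_pow_le_min {t : ℝ} (ht : 0 < t) (L : ℕ) :
    1 / max 1 t ^ L ≤ min (1 / t ^ L) 1 := by
  refine le_min ?_ ?_
  · gcongr; exact le_max_right _ _
  · exact div_le_one_of_le₀ (one_le_pow₀ (le_max_left _ _)) (by positivity)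

theorem one_div_max_one_pow_le_zpow {t : ℝ} (ht : 0 ≤ t) (L : ℕ) :
    1 / max 1 t ^ L ≤ 2 ^ L * (1 + t) ^ (-(L : ℤ)) := by
  have hmax : 1 + t ≤ 2 * max 1 t := by linarith [le_max_left 1 t, le_max_right 1 t]
  rw [zpow_neg, zpow_natCast, ← div_eq_mul_inv, div_le_div_iff₀ (by positivity) (by positivity),
    one_mul, ← mul_pow]
  gcongr

theorem KLper_decay (L : ℕ) (hL : 2 ≤ L) :
    (∃ C > (0 : ℝ), ∀ j : ℕ, ∀ x ∈ Set.Icc (-Real.pi) Real.pi, x ≠ 0 →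
        |KLper L j x| ≤ C * min (1 / ((2 : ℝ) ^ j * |x|) ^ L) 1) ∧
    (∃ Cs > (0 : ℝ), ∀ j : ℕ, ∀ x ∈ Set.Icc (-Real.pi) Real.pi,
        |KLper L j x| ≤ Cs * (1 + (2 : ℝ) ^ j * |x|) ^ (-(L : ℤ))) := by
  set S := ∑' k : ℤ, 1 / max 1 |(k : ℝ)| ^ L
  have hS : 0 < S := (summable_one_div_max_one_abs_int_pow hL).tsum_pos
    (fun _ => by positivity) 0 (by simp)
  have hbound : ∀ j : ℕ, ∀ x ∈ Set.Icc (-π) π,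
      |KLper L j x| ≤ (2 ^ L) ^ L * S * (1 / max 1 (2 ^ j * |x|) ^ L) := fun j x hx => by
    rw [mul_one_div]
    exact abs_KLper_le hL j (abs_le.mpr hx)
  refine ⟨⟨(2 ^ L) ^ L * S, by positivity, fun j x hx hx0 => ?_⟩,
    ⟨(2 ^ L) ^ L * S * 2 ^ L, by positivity, fun j x hx => ?_⟩⟩
  · refine (hbound j x hx).trans (mul_le_mul_of_nonneg_left ?_ (by positivity))
    exact one_div_max_one_pow_le_min (by positivity) L
  · rw [mul_assoc]
    refine (hbound j x hx).trans (mul_le_mul_of_nonneg_left ?_ (by positivity))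
    exact one_div_max_one_pow_le_zpow (by positivity) L
end

section
/- For L ≥ 2 and j ∈ ℕ₀, the periodized kernel satisfies the fundamental interpolation property K^L_{π,j}(2πu/2^j) = δ_{0,u} for all integers u with -2^{j-1} ≤ u ≤ 2^{j-1}-1. -/
open Real Finset

/-- The sampling grid indices on level `j`: the integers `u` with
`-2^{j-1} ≤ u ≤ 2^{j-1}-1` (interpreted as `{0}` when `j = 0`). -/
noncomputable def dyadicGrid (j : ℕ) : Finset ℤ :=
  if j = 0 then {0} else Finset.Icc (-(2 ^ (j - 1) : ℤ)) ((2 : ℤ) ^ (j - 1) - 1)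

/-!
Sampling `K^L_{π,j}` at `2πu/2^j` turns every term of the periodization into a value of `K^L` at
an integer multiple `2π(u + 2^j k)` of `2π`. There the first factor `sinc(π(u + 2^j k))` vanishes
unless `u + 2^j k = 0`, and for `u` in the grid (so `|u| < 2^j`) this happens only for `u = k = 0`.
-/

lemma KL_zero (L : ℕ) : KL L 0 = 1 := by
  simp [KL, _root_.sinc]

lemma KL_two_pi_mul_int {L : ℕ} (hL : 1 ≤ L) (m : ℤ) :
    KL L (2 * π * m) = if m = 0 then 1 else 0 := by
  split_ifs with hm
  · simp [hm, KL_zero]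
  · refine Finset.prod_eq_zero (i := 1) (by simp [hL]) ?_
    have hne : π * m ≠ 0 := mul_ne_zero pi_ne_zero (by exact_mod_cast hm)
    rw [show 2 * π * m / 2 ^ 1 = π * m by ring, _root_.sinc, if_neg hne, mul_comm,
      sin_int_mul_pi, zero_div]

lemma KLper_two_pi_mul_div (L j : ℕ) (u : ℤ) :
    KLper L j (2 * π * u / 2 ^ j) = ∑' k : ℤ, KL L (2 * π * ((u + 2 ^ j * k : ℤ) : ℝ)) := by
  refine tsum_congr fun k ↦ congrArg (KL L) ?_
  push_cast
  field_simp

lemma abs_lt_two_pow_of_mem_dyadicGrid {j : ℕ} {u : ℤ} (hu : u ∈ dyadicGrid j) :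
    |u| < 2 ^ j := by
  rcases j with _ | j
  · simp_all [dyadicGrid]
  · simp only [dyadicGrid, Nat.add_sub_cancel, if_neg (Nat.succ_ne_zero j), mem_Icc] at hu
    rw [abs_lt, pow_succ]
    constructor <;> linarith [pow_pos (two_pos : (0 : ℤ) < 2) j]

lemma add_two_pow_mul_ne_zero {j : ℕ} {u k : ℤ} (hu : u ∈ dyadicGrid j) (hk : k ≠ 0) :
    u + 2 ^ j * k ≠ 0 := by
  intro h
  have hu0 : u = 0 :=
    Int.eq_zero_of_abs_lt_dvd ⟨-k, by linarith⟩ (abs_lt_two_pow_of_mem_dyadicGrid hu)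
  simp_all

theorem KLper_fundamental_interpolant (L : ℕ) (hL : 2 ≤ L) (j : ℕ)
    (u : ℤ) (hu : u ∈ dyadicGrid j) :
    KLper L j (2 * Real.pi * u / 2 ^ j) = if u = 0 then 1 else 0 := by
  have hL1 : 1 ≤ L := by omega
  rw [KLper_two_pi_mul_div, tsum_eq_single 0]
  · simpa using KL_two_pi_mul_int hL1 u
  · intro k hk
    rw [KL_two_pi_mul_int hL1, if_neg (add_two_pow_mul_ne_zero hu hk)]
end

section
/- Second derivative of the cotangent series: for every real x not an integer multiple of 2π, ∑_{k∈ℤ} 1/(x+2πk)² = 1/(4 sin²(x/2)). -/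
/-!
Parseval's identity for `t ↦ exp (2πist)` on `[0, 1]`, with `s` real and not an integer: the
function has modulus one, and its `n`-th Fourier coefficient `(exp (2πis) - 1) / (2πi(s - n))`
has squared modulus `sin² (πs) / (π² (s - n)²)`. Hence `∑ 1 / (s - n)² = π² / sin² (πs)`, and
`s = x / 2π` gives the theorem.
-/

open Real Complex MeasureTheory

theorem fourierCoeffOn_cexp_two_pi_I_mul {s : ℂ} {n : ℤ} (hn : s ≠ n) :
    fourierCoeffOn zero_lt_one (fun t : ℝ => cexp (2 * π * I * s * t)) n =
      (cexp (2 * π * I * s) - 1) / (2 * π * I * (s - n)) := by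
  have hc : 2 * π * I * (s - n) ≠ 0 := by
    simp [sub_ne_zero.2 hn, Real.pi_ne_zero, I_ne_zero]
  have hmul (t : ℝ) : fourier (-n) (t : AddCircle (1 - 0 : ℝ)) • cexp (2 * π * I * s * t) =
      cexp (2 * π * I * (s - n) * t) := by
    rw [fourier_coe_apply, smul_eq_mul, ← Complex.exp_add]
    push_cast
    ring_nf
  have hper : cexp (2 * π * I * (s - n)) = cexp (2 * π * I * s) := by
    rw [mul_sub, Complex.exp_sub, mul_comm _ (n : ℂ), Complex.exp_int_mul_two_pi_mul_I, div_one]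
  simp only [fourierCoeffOn_eq_integral, hmul, integral_exp_mul_complex hc]
  simp [hper]

theorem norm_sq_fourierCoeffOn_cexp_two_pi_I_mul {s : ℝ} {n : ℤ} (hn : s ≠ n) :
    ‖fourierCoeffOn zero_lt_one (fun t : ℝ => cexp (2 * π * I * s * t)) n‖ ^ 2 =
      Real.sin (π * s) ^ 2 / π ^ 2 * (1 / (s - n) ^ 2) := by
  have hden : 2 * π * I * (s - n) = ((2 * π * (s - n) : ℝ) : ℂ) * I := by push_cast; ring
  have hnum : 2 * π * I * s = I * ((2 * π * s : ℝ) : ℂ) := by push_cast; ring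
  have hn' : (s : ℂ) ≠ n := by exact_mod_cast hn
  rw [fourierCoeffOn_cexp_two_pi_I_mul hn', hden, hnum, norm_div, norm_exp_I_mul_ofReal_sub_one]
  simp only [norm_mul, norm_I, Complex.norm_real, Real.norm_eq_abs, mul_one, div_pow, mul_pow,
    sq_abs]
  field_simp

theorem hasSum_one_div_sub_int_sq {s : ℝ} (hs : ∀ n : ℤ, s ≠ n) :
    HasSum (fun n : ℤ => 1 / (s - n) ^ 2) (π ^ 2 / Real.sin (π * s) ^ 2) := by
  set f : ℝ → ℂ := fun t => cexp (2 * π * I * s * t)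
  have hf_norm (t : ℝ) : ‖f t‖ = 1 := by
    simpa [f, mul_comm, mul_assoc, mul_left_comm] using norm_exp_ofReal_mul_I (2 * π * s * t)
  have hf : MemLp f 2 (volume.restrict (Set.Ioc 0 1)) :=
    MemLp.of_bound (by fun_prop) 1 (.of_forall fun t => (hf_norm t).le)
  have hparseval : HasSum (fun n : ℤ => Real.sin (π * s) ^ 2 / π ^ 2 * (1 / (s - n) ^ 2)) 1 := by
    have hcoeff (n : ℤ) : ‖fourierCoeffOn zero_lt_one f n‖ ^ 2 =
        Real.sin (π * s) ^ 2 / π ^ 2 * (1 / (s - n) ^ 2) :=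
      norm_sq_fourierCoeffOn_cexp_two_pi_I_mul (hs n)
    simpa [hcoeff, hf_norm] using hasSum_sq_fourierCoeffOn zero_lt_one hf
  have hsin : Real.sin (π * s) ≠ 0 := by
    rw [mul_comm]
    exact Real.sin_ne_zero_iff.2 fun n h => hs n (by simpa [Real.pi_ne_zero] using h.symm)
  have hc : Real.sin (π * s) ^ 2 / π ^ 2 ≠ 0 := by positivity
  have h := (hparseval.mul_left _).congr_fun fun n =>
    (inv_mul_cancel_left₀ hc (1 / (s - n) ^ 2)).symm
  rwa [mul_one, inv_div] at h

theorem hasSum_one_div_add_int_sq {s : ℝ} (hs : ∀ n : ℤ, s ≠ n) :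
    HasSum (fun n : ℤ => 1 / (s + n) ^ 2) (π ^ 2 / Real.sin (π * s) ^ 2) := by
  rw [← (Equiv.neg ℤ).hasSum_iff]
  simpa [Function.comp_def, sub_eq_add_neg] using hasSum_one_div_sub_int_sq hs

theorem tsum_inv_sq_shifted (x : ℝ) (hx : ∀ n : ℤ, x ≠ 2 * Real.pi * n) :
    ∑' k : ℤ, 1 / (x + 2 * Real.pi * k) ^ 2 = 1 / (4 * Real.sin (x / 2) ^ 2) := by
  have hs : ∀ n : ℤ, x / (2 * π) ≠ n := fun n h => hx n (by field_simp at h; linarith)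
  calc ∑' k : ℤ, 1 / (x + 2 * π * k) ^ 2
      = ∑' k : ℤ, 1 / (2 * π) ^ 2 * (1 / (x / (2 * π) + k) ^ 2) :=
        tsum_congr fun k => by field_simp
    _ = 1 / (2 * π) ^ 2 * (π ^ 2 / Real.sin (π * (x / (2 * π))) ^ 2) :=
        ((hasSum_one_div_add_int_sq hs).mul_left _).tsum_eq
    _ = 1 / (4 * Real.sin (x / 2) ^ 2) := by
        rw [show π * (x / (2 * π)) = x / 2 by field_simp]
        field_simp
        ring
end

section
/- Anisotropic hyperbolic-cross sum bound: let r = (r_1,…,r_d) ∈ ℝ^d and η = (η_1,…,η_d) satisfy 0 < r_1 = η_1 = … = r_μ = η_μ < r_{μ+1} ≤ … ≤ r_d and r_1 < η_s < r_s for s = μ+1,…,d. Then there is a constant C (independent of m) such that ∑_{j ∈ ℕ₀^d, (1/η_1) η·j > m} 2^{-r·j} ≤ C m^{μ-1} 2^{-r_1 m} for all m ≥ 1. -/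
open Real Finset

/-!
Split `j = (j', j'')` into the first `μ` coordinates and the rest, and let `K = |j'|`. Fix
`θ ∈ (1, 2]` with `θ η_s < r_s` for `s > μ`. On the region `η · j > r₁ m` one has
`r · j ≥ r₁ m + (θ - 1) r₁ |K - m| + ∑_{s > μ} (r_s - θ η_s) j_s`, so the summand is at most
`2^{-r₁ m}` times a factor depending only on `K`, decaying geometrically in `|K - m|`, times a
geometric weight in `j''`. The weight in `j''` sums to a constant. Since at most `(K + 1)^{μ - 1}`
vectors `j'` have `|j'| = K`, and `K + 1 ≤ m (|K - m| + 2)`, the factor in `K` sums to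
`O(m^{μ - 1})`.
-/

open Filter Topology in
lemma eventually_mul_lt {ι : Type*} [Finite ι] {a b : ι → ℝ} (h : ∀ i, a i < b i) :
    ∀ᶠ θ in 𝓝 (1 : ℝ), ∀ i, θ * a i < b i :=
  eventually_all.2 fun i =>
    (continuous_id.mul continuous_const).continuousAt.eventually_lt continuousAt_const
      (by simpa using h i)

lemma mul_add_mul_abs_sub_le {r₀ θ k m A : ℝ} (hr₀ : 0 ≤ r₀) (hθ₀ : 0 ≤ θ) (hθ₂ : θ ≤ 2)
    (hA : 0 ≤ A) (h : r₀ * m < r₀ * k + A) :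
    r₀ * m + (θ - 1) * r₀ * |k - m| ≤ r₀ * k + θ * A := by
  rcases le_total m k with hmk | hkm
  · rw [abs_of_nonneg (sub_nonneg.2 hmk)]
    nlinarith [mul_nonneg (mul_nonneg (sub_nonneg.2 hθ₂) hr₀) (sub_nonneg.2 hmk),
      mul_nonneg hθ₀ hA]
  · rw [abs_of_nonpos (sub_nonpos.2 hkm)]
    nlinarith [mul_le_mul_of_nonneg_left (show r₀ * (m - k) ≤ A by linarith) hθ₀]

lemma card_filter_sum_eq_le {κ : Type*} [Fintype κ] [Nonempty κ] (t : Finset (κ → ℕ)) (k : ℕ) :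
    #{x ∈ t | ∑ i, x i = k} ≤ (k + 1) ^ (Fintype.card κ - 1) := by
  classical
  obtain ⟨i₀⟩ := ‹Nonempty κ›
  -- a vector with coordinate sum `k` is determined by its coordinates off `i₀`, each `≤ k`
  calc #{x ∈ t | ∑ i, x i = k}
      ≤ #(Fintype.piFinset fun _ : univ.erase i₀ => range (k + 1)) := by
        refine card_le_card_of_injOn (univ.erase i₀).restrict (fun x hx => ?_)
          fun x hx x' hx' hxx' => ?_
        · simp only [coe_filter, Set.mem_ofPred_eq] at hx
          simpa [Fintype.mem_piFinset, Nat.lt_succ_iff, ← hx.2] using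
            fun i _ => single_le_sum (fun i _ => Nat.zero_le (x i)) (mem_univ i)
        · simp only [coe_filter, Set.mem_ofPred_eq] at hx hx'
          have hE : ∀ i ∈ univ.erase i₀, x i = x' i := fun i hi => congrFun hxx' ⟨i, hi⟩
          funext i
          by_cases hi : i = i₀
          · subst hi
            have := add_sum_erase univ x (mem_univ i)
            have := add_sum_erase univ x' (mem_univ i)
            have : ∑ j ∈ univ.erase i, x j = ∑ j ∈ univ.erase i, x' j := sum_congr rfl hE
            omega
          · exact hE i (mem_erase.2 ⟨hi, mem_univ i⟩)
    _ = (k + 1) ^ (Fintype.card κ - 1) := by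
        simp [Fintype.card_piFinset, card_erase_of_mem]

lemma sum_comp_sum_le {κ : Type*} [Fintype κ] [Nonempty κ] {φ : ℕ → ℝ} (hφ : 0 ≤ φ) {A : ℝ}
    (hA : ∀ u : Finset ℕ, ∑ k ∈ u, ((k : ℝ) + 1) ^ (Fintype.card κ - 1) * φ k ≤ A)
    (t : Finset (κ → ℕ)) :
    ∑ x ∈ t, φ (∑ i, x i) ≤ A := by
  classical
  rw [sum_comp]
  refine (sum_le_sum fun k _ => ?_).trans (hA _)
  rw [nsmul_eq_mul]
  gcongr
  · exact hφ k
  · exact_mod_cast card_filter_sum_eq_le t k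

lemma sum_natAbs_sub_le_two_mul_tsum {h : ℕ → ℝ} (h₀ : 0 ≤ h) (hs : Summable h) (m : ℕ)
    (u : Finset ℕ) :
    ∑ k ∈ u, h ((k : ℤ) - m).natAbs ≤ 2 * ∑' n, h n := by
  rw [sum_comp]
  calc _ ≤ ∑ n ∈ u.image fun k : ℕ => ((k : ℤ) - m).natAbs, 2 * h n := by
        refine sum_le_sum fun n _ => ?_
        rw [nsmul_eq_mul]
        gcongr
        · exact h₀ n
        · have : u.filter (fun k : ℕ => ((k : ℤ) - m).natAbs = n) ⊆ {m + n, m - n} := by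
            intro k hk
            simp only [mem_filter] at hk
            simp only [mem_insert, mem_singleton]
            omega
          exact_mod_cast (card_le_card this).trans card_le_two
    _ ≤ 2 * ∑' n, h n := by
        rw [← mul_sum]
        gcongr
        exact hs.sum_le_tsum _ fun n _ => h₀ n

lemma summable_add_two_pow_mul_geometric (p : ℕ) {c : ℝ} (hc₀ : 0 < c) (hc₁ : c < 1) :
    Summable fun n : ℕ => ((n : ℝ) + 2) ^ p * c ^ n := by
  have := (summable_nat_add_iff (f := fun n : ℕ => (n : ℝ) ^ p * c ^ n) 2).2 <|
    summable_pow_mul_geometric_of_norm_lt_one p (by rwa [norm_of_nonneg hc₀.le])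
  refine (this.mul_left (c ^ 2)⁻¹).congr fun n => ?_
  push_cast
  rw [pow_add]
  field_simp

lemma exists_sum_pow_mul_pow_natAbs_sub_le (p : ℕ) {c : ℝ} (hc₀ : 0 < c) (hc₁ : c < 1) :
    ∃ C > 0, ∀ m : ℕ, 1 ≤ m → ∀ u : Finset ℕ,
      ∑ k ∈ u, ((k : ℝ) + 1) ^ p * c ^ ((k : ℤ) - m).natAbs ≤ C * (m : ℝ) ^ p := by
  set h : ℕ → ℝ := fun n => ((n : ℝ) + 2) ^ p * c ^ n
  have h₀ : 0 ≤ h := fun n => by positivity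
  have hs : Summable h := summable_add_two_pow_mul_geometric p hc₀ hc₁
  refine ⟨2 * ∑' n, h n, mul_pos two_pos (hs.tsum_pos h₀ 0 (by positivity)), fun m hm u => ?_⟩
  calc ∑ k ∈ u, ((k : ℝ) + 1) ^ p * c ^ ((k : ℤ) - m).natAbs
      ≤ ∑ k ∈ u, (m : ℝ) ^ p * h ((k : ℤ) - m).natAbs := by
        refine sum_le_sum fun k _ => ?_
        rw [← mul_assoc, ← mul_pow]
        gcongr
        have : ((k : ℤ) - m).natAbs ≤ m * ((k : ℤ) - m).natAbs := Nat.le_mul_of_pos_left _ hm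
        exact_mod_cast (show k + 1 ≤ m * (((k : ℤ) - m).natAbs + 2) by rw [mul_add]; omega)
    _ ≤ (m : ℝ) ^ p * (2 * ∑' n, h n) := by
        rw [← mul_sum]
        gcongr
        exact sum_natAbs_sub_le_two_mul_tsum h₀ hs m u
    _ = (2 * ∑' n, h n) * (m : ℝ) ^ p := by ring

lemma sum_prod_pow_le_prod_inv_one_sub {κ : Type*} [Fintype κ] {q : κ → ℝ} (hq₀ : 0 ≤ q)
    (hq₁ : ∀ i, q i < 1) (t : Finset (κ → ℕ)) :
    ∑ y ∈ t, ∏ i, q i ^ y i ≤ ∏ i, (1 - q i)⁻¹ := by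
  classical
  calc ∑ y ∈ t, ∏ i, q i ^ y i
      ≤ ∑ y ∈ Fintype.piFinset fun i => t.image (· i), ∏ i, q i ^ y i := by
        refine sum_le_sum_of_subset_of_nonneg (fun y hy => ?_) fun y _ _ =>
          prod_nonneg fun i _ => pow_nonneg (hq₀ i) _
        exact Fintype.mem_piFinset.2 fun i => mem_image_of_mem _ hy
    _ = ∏ i, ∑ n ∈ t.image (· i), q i ^ n := (prod_univ_sum _ _).symm
    _ ≤ ∏ i, (1 - q i)⁻¹ := by
        refine prod_le_prod (fun i _ => sum_nonneg fun n _ => pow_nonneg (hq₀ i) n) fun i _ => ?_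
        rw [← tsum_geometric_of_lt_one (hq₀ i) (hq₁ i)]
        exact (summable_geometric_of_lt_one (hq₀ i) (hq₁ i)).sum_le_tsum _
          fun n _ => pow_nonneg (hq₀ i) n

lemma sum_mul_le_of_injective {γ α β : Type*} {f : γ → α} {g : γ → β}
    (hfg : Function.Injective fun j => (f j, g j)) {F : α → ℝ} {G : β → ℝ} (hF₀ : 0 ≤ F)
    (hG₀ : 0 ≤ G) {A B : ℝ} (hF : ∀ t, ∑ x ∈ t, F x ≤ A) (hG : ∀ t, ∑ y ∈ t, G y ≤ B)
    (s : Finset γ) :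
    ∑ j ∈ s, F (f j) * G (g j) ≤ A * B := by
  classical
  calc ∑ j ∈ s, F (f j) * G (g j)
      = ∑ z ∈ s.image fun j => (f j, g j), F z.1 * G z.2 :=
        (sum_image (f := fun z => F z.1 * G z.2) hfg.injOn).symm
    _ ≤ ∑ z ∈ s.image f ×ˢ s.image g, F z.1 * G z.2 := by
        refine sum_le_sum_of_subset_of_nonneg ?_ fun z _ _ => mul_nonneg (hF₀ _) (hG₀ _)
        simp only [subset_iff, mem_image, mem_product]
        rintro _ ⟨j, hj, rfl⟩
        exact ⟨⟨j, hj, rfl⟩, ⟨j, hj, rfl⟩⟩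
    _ = (∑ x ∈ s.image f, F x) * ∑ y ∈ s.image g, G y := by rw [sum_product, sum_mul_sum]
    _ ≤ A * B := mul_le_mul (hF _) (hG _) (sum_nonneg fun y _ => hG₀ y) (by simpa using hF ∅)

lemma two_rpow_neg_sum_le {ι : Type*} [Fintype ι] (p : ι → Prop) [DecidablePred p]
    {r η : ι → ℝ} {r₀ θ : ℝ} (hr₀ : 0 ≤ r₀) (hθ₀ : 0 ≤ θ) (hθ₂ : θ ≤ 2)
    (hp : ∀ i, p i → r i = r₀ ∧ η i = r₀) (hη : ∀ i, ¬p i → 0 ≤ η i)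
    {j : ι → ℕ} {m : ℕ} (hj : r₀ * m < ∑ i, η i * j i) :
    (2 : ℝ) ^ (-∑ i, r i * j i) ≤ 2 ^ (-(r₀ * m)) *
      (((2 : ℝ) ^ (-((θ - 1) * r₀))) ^ (((∑ i : {i // p i}, j i : ℕ) : ℤ) - m).natAbs *
        ∏ i : {i // ¬p i}, ((2 : ℝ) ^ (-(r i - θ * η i))) ^ j i) := by
  set K : ℝ := ∑ i : {i // p i}, (j i : ℝ)
  have sum_split (w : ι → ℝ) (hw : ∀ i, p i → w i = r₀) :
      ∑ i, w i * j i = r₀ * K + ∑ i : {i // ¬p i}, w i * j i := by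
    rw [← Fintype.sum_subtype_add_sum_subtype p, mul_sum]
    exact congrArg (· + _) (sum_congr rfl fun i _ => by rw [hw i i.2])
  have hA : 0 ≤ ∑ i : {i // ¬p i}, η i * j i :=
    sum_nonneg fun i _ => mul_nonneg (hη i i.2) (Nat.cast_nonneg _)
  have hexp := mul_add_mul_abs_sub_le (k := K) hr₀ hθ₀ hθ₂ hA
    (by rwa [sum_split η fun i hi => (hp i hi).2] at hj)
  have hq : ∑ i : {i // ¬p i}, -(r i - θ * η i) * j i =
      θ * ∑ i : {i // ¬p i}, η i * j i - ∑ i : {i // ¬p i}, r i * j i := by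
    rw [mul_sum, ← sum_sub_distrib]
    exact sum_congr rfl fun i _ => by ring
  have hK : ((((∑ i : {i // p i}, j i : ℕ) : ℤ) - m).natAbs : ℝ) = |K - m| := by
    rw [Nat.cast_natAbs]
    push_cast
    rfl
  calc (2 : ℝ) ^ (-∑ i, r i * j i)
      ≤ 2 ^ (-(r₀ * m) + -((θ - 1) * r₀) * |K - m| +
          ∑ i : {i // ¬p i}, -(r i - θ * η i) * j i) := by
        refine rpow_le_rpow_of_exponent_le one_le_two ?_
        rw [sum_split r fun i hi => (hp i hi).1, hq]
        linarith
    _ = _ := by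
        rw [rpow_add two_pos, rpow_add two_pos, rpow_sum_of_pos two_pos, ← hK,
          rpow_mul_natCast zero_le_two, mul_assoc]
        simp only [rpow_mul_natCast zero_le_two]

theorem aniso_tail_sum_bound_general (d μ : ℕ) (hd : 0 < d) (hμ1 : 1 ≤ μ) (hμd : μ ≤ d)
    (r η : Fin d → ℝ) (h0 : 0 < r ⟨0, hd⟩)
    (heq : ∀ i : Fin d, (i : ℕ) < μ → r i = r ⟨0, hd⟩ ∧ η i = r ⟨0, hd⟩)
    (hbig : ∀ i : Fin d, μ ≤ (i : ℕ) → r ⟨0, hd⟩ < η i ∧ η i < r i) :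
    ∃ C > (0 : ℝ), ∀ m : ℕ, 1 ≤ m →
      (∑' j : Fin d → ℕ,
          if (m : ℝ) < (∑ i, η i * j i) / η ⟨0, hd⟩ then
            (2 : ℝ) ^ (-(∑ i, r i * j i)) else 0)
        ≤ C * (m : ℝ) ^ (μ - 1) * (2 : ℝ) ^ (-(r ⟨0, hd⟩ * m)) := by
  set r₀ := r ⟨0, hd⟩
  set p : Fin d → Prop := fun i => (i : ℕ) < μ
  have hp : Fintype.card {i // p i} = μ := Fintype.card_fin_lt_of_le hμd
  have : Nonempty {i // p i} := ⟨⟨⟨0, hd⟩, hμ1⟩⟩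
  have hS (i : {i // ¬p i}) : η i < r i := (hbig i (not_lt.1 i.2)).2
  obtain ⟨θ, hθ, hθ₁, hθ₂⟩ := ((eventually_mul_lt hS).filter_mono
    nhdsWithin_le_nhds |>.and (Ioc_mem_nhdsGT one_lt_two)).exists
  set q : {i // ¬p i} → ℝ := fun i => 2 ^ (-(r i - θ * η i))
  have hq₁ (i) : q i < 1 := rpow_lt_one_of_one_lt_of_neg one_lt_two (by linarith [hθ i])
  set c : ℝ := 2 ^ (-((θ - 1) * r₀))
  obtain ⟨A, hA, hF⟩ := exists_sum_pow_mul_pow_natAbs_sub_le (μ - 1) (c := c) (by positivity)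
    (rpow_lt_one_of_one_lt_of_neg one_lt_two (neg_neg_of_pos (mul_pos (sub_pos.2 hθ₁) h0)))
  have hC : 0 < A * ∏ i, (1 - q i)⁻¹ := mul_pos hA (prod_pos fun i _ => by simpa using hq₁ i)
  refine ⟨_, hC, fun m hm => tsum_le_of_sum_le' (by positivity) fun s => ?_⟩
  have hT (t : Finset ({i // p i} → ℕ)) :
      ∑ x ∈ t, c ^ (((∑ i, x i : ℕ) : ℤ) - m).natAbs ≤ A * m ^ (μ - 1) :=
    sum_comp_sum_le (φ := fun k => c ^ ((k : ℤ) - m).natAbs) (fun k => by positivity)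
      (by rw [hp]; exact hF m hm) t
  calc _ ≤ ∑ j ∈ s, 2 ^ (-(r₀ * m)) *
          (c ^ (((∑ i : {i // p i}, j i : ℕ) : ℤ) - m).natAbs * ∏ i, q i ^ j i) := by
        refine sum_le_sum fun j _ => ?_
        split_ifs with hj
        · refine two_rpow_neg_sum_le p h0.le (by linarith) hθ₂ heq
            (fun i hi => h0.le.trans (hbig i (not_lt.1 hi)).1.le) ?_
          rwa [(heq ⟨0, hd⟩ hμ1).2, lt_div_iff₀ h0, mul_comm] at hj
        · positivity
    _ = 2 ^ (-(r₀ * m)) * ∑ j ∈ s,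
          c ^ (((∑ i : {i // p i}, j i : ℕ) : ℤ) - m).natAbs * ∏ i, q i ^ j i := (mul_sum ..).symm
    _ ≤ 2 ^ (-(r₀ * m)) * ((A * m ^ (μ - 1)) * ∏ i, (1 - q i)⁻¹) := by
        gcongr
        exact sum_mul_le_of_injective (Equiv.piEquivPiSubtypeProd p _).injective
          (fun x => by positivity) (fun y => prod_nonneg fun i _ => by positivity) hT
          (sum_prod_pow_le_prod_inv_one_sub (fun i => by positivity) hq₁) s
    _ = _ := by ring

theorem aniso_tail_sum_bound (d μ : ℕ) (hd : 0 < d) (hμ1 : 1 ≤ μ) (hμd : μ ≤ d)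
    (r η : Fin d → ℝ) (h0 : 0 < r ⟨0, hd⟩)
    (heq : ∀ i : Fin d, (i : ℕ) < μ → r i = r ⟨0, hd⟩ ∧ η i = r ⟨0, hd⟩)
    (hbig : ∀ i : Fin d, μ ≤ (i : ℕ) → r ⟨0, hd⟩ < η i ∧ η i < r i)
    (hmono : ∀ i i' : Fin d, μ ≤ (i : ℕ) → i ≤ i' → r i ≤ r i') :
    ∃ C > (0 : ℝ), ∀ m : ℕ, 1 ≤ m →
      (∑' j : Fin d → ℕ,
          if (m : ℝ) < (∑ i, η i * j i) / η ⟨0, hd⟩ then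
            (2 : ℝ) ^ (-(∑ i, r i * j i)) else 0)
        ≤ C * (m : ℝ) ^ (μ - 1) * (2 : ℝ) ^ (-(r ⟨0, hd⟩ * m)) :=
  aniso_tail_sum_bound_general d μ hd hμ1 hμd r η h0 heq hbig
end

section
/- Anisotropic grid cardinality: let r ∈ ℝ^d with 0 < r_1 = … = r_μ < r_{μ+1} ≤ … ≤ r_d < ∞. Then ∑_{j ∈ ℕ₀^d, (1/r_1) r·j ≤ m} 2^{|j|_1} ≍ m^{μ-1} 2^m for all m ≥ 1, i.e., there exist constants c, C > 0 independent of m with c m^{μ-1} 2^m ≤ ∑_{(1/r_1) r·j ≤ m} 2^{|j|_1} ≤ C m^{μ-1} 2^m. -/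
/-!
Normalise the weights to `s i = r i / r₀`: then `s = 1` on the first `μ` coordinates (the head)
and `s ≥ 1 + ε` on the others (the tail). For the lower bound, the `(m+μ-1).choose (μ-1) ≥
(m+1)^(μ-1) / (μ-1)!` compositions of `m` supported on the head all satisfy the constraint and
contribute `2^m` each. For the upper bound, group the admissible `j` by `n = |j|₁ ≤ m`: a tail
coordinate costs at least `ε` more per unit than it contributes to `|j|₁`, so it is at most
`(m - n) / ε`, and the level `n` has at most `(m+1)^(μ-1) ((m-n)/ε + 1)^(d-μ)` points. Since
`∑ₗ (l+1)^D 2^(-l)` converges, `∑_{n ≤ m} (m-n+1)^D 2^n = O(2^m)`.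
-/

open Finset

namespace Finset

lemma card_piAntidiag_nat {ι : Type*} [DecidableEq ι] (s : Finset ι) (n : ℕ) :
    #(piAntidiag s n) = (#s + n - 1).choose n := by
  rw [← card_finsuppAntidiag_nat_eq_choose, finsuppAntidiag, card_map, card_attach]

lemma card_le_prod_erase_of_sum_eq {ι : Type*} [Fintype ι] [DecidableEq ι]
    {A : Finset (ι → ℕ)} {t : ι → Finset ℕ} {n : ℕ} (i₀ : ι)
    (hA : A ⊆ Fintype.piFinset t) (hsum : ∀ j ∈ A, ∑ i, j i = n) :
    #A ≤ ∏ i ∈ univ.erase i₀, #(t i) := by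
  have hbox : #(Fintype.piFinset (Function.update t i₀ {0})) = ∏ i ∈ univ.erase i₀, #(t i) := by
    rw [Fintype.card_piFinset, ← mul_prod_erase univ _ (mem_univ i₀)]
    simp only [Function.update_self, card_singleton, one_mul]
    exact prod_congr rfl fun i hi => by rw [Function.update_of_ne (ne_of_mem_erase hi)]
  rw [← hbox]
  refine card_le_card_of_injOn (Function.update · i₀ 0) (fun j hj => ?_) fun j hj j' hj' h => ?_
  · refine Fintype.mem_piFinset.2 fun i => ?_
    rcases eq_or_ne i i₀ with rfl | hi
    · simp
    · simpa [Function.update_of_ne hi] using Fintype.mem_piFinset.1 (hA hj) i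
  · have hrest : ∀ i ≠ i₀, j i = j' i := fun i hi => by
      simpa [Function.update_of_ne hi] using congrFun h i
    have hsum' : ∑ i ∈ univ.erase i₀, j i = ∑ i ∈ univ.erase i₀, j' i :=
      sum_congr rfl fun i hi => hrest i (ne_of_mem_erase hi)
    have h₀ := hsum j hj
    have h₀' := hsum j' hj'
    rw [← add_sum_erase univ _ (mem_univ i₀)] at h₀ h₀'
    funext i
    rcases eq_or_ne i i₀ with rfl | hi
    · omega
    · exact hrest i hi

end Finset

lemma exists_pos_add_le_of_forall_lt {ι : Type*} [Finite ι] {p : ι → Prop} {f : ι → ℝ} {a : ℝ}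
    (h : ∀ i, p i → a < f i) : ∃ ε > 0, ∀ i, p i → a + ε ≤ f i := by
  have : ∀ᶠ ε in nhdsWithin (0 : ℝ) (Set.Ioi 0), ∀ i, p i → a + ε ≤ f i := by
    refine Filter.eventually_all.2 fun i => ?_
    by_cases hi : p i
    · filter_upwards [nhdsWithin_le_nhds (eventually_le_nhds (sub_pos.2 (h i hi)))] with ε hε
      exact fun _ => by linarith
    · exact Filter.Eventually.of_forall fun _ hi' => absurd hi' hi
  exact (this.and self_mem_nhdsWithin).exists.imp fun ε h => ⟨h.2, h.1⟩

lemma summable_add_one_pow_mul_geometric (D : ℕ) :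
    Summable fun l : ℕ => ((l : ℝ) + 1) ^ D * (1 / 2) ^ l := by
  have h := (summable_nat_add_iff 1).2 (summable_pow_mul_geometric_of_norm_lt_one D
    (r := (1 / 2 : ℝ)) (by norm_num))
  refine (h.mul_left 2).congr fun l => ?_
  push_cast
  ring

lemma exists_sum_range_sub_add_one_pow_mul_two_pow_le (D : ℕ) :
    ∃ G > 0, ∀ m : ℕ, ∑ n ∈ range (m + 1), (((m - n : ℕ) : ℝ) + 1) ^ D * 2 ^ n ≤ G * 2 ^ m := by
  have hsum := summable_add_one_pow_mul_geometric D
  refine ⟨∑' l : ℕ, ((l : ℝ) + 1) ^ D * (1 / 2) ^ l,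
    hsum.tsum_pos (fun _ => by positivity) 0 (by norm_num), fun m => ?_⟩
  calc ∑ n ∈ range (m + 1), (((m - n : ℕ) : ℝ) + 1) ^ D * 2 ^ n
      = 2 ^ m * ∑ l ∈ range (m + 1), ((l : ℝ) + 1) ^ D * (1 / 2) ^ l := by
        rw [mul_sum, ← sum_range_reflect (fun l : ℕ => 2 ^ m * (((l : ℝ) + 1) ^ D * (1 / 2) ^ l))]
        refine sum_congr rfl fun n hn => ?_
        have hn : n ≤ m := Nat.lt_succ_iff.1 (mem_range.1 hn)
        have h2 : (2 : ℝ) ^ m = 2 ^ (m - n) * 2 ^ n := by rw [← pow_add, Nat.sub_add_cancel hn]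
        rw [show m + 1 - 1 - n = m - n by omega, h2, one_div, inv_pow]
        field_simp
    _ ≤ 2 ^ m * ∑' l : ℕ, ((l : ℝ) + 1) ^ D * (1 / 2) ^ l := by
        gcongr
        exact hsum.sum_le_tsum _ fun _ _ => by positivity
    _ = _ := mul_comm _ _

section WeightedSimplex

variable {ι : Type*} [Fintype ι] {s : ι → ℝ}

lemma sum_le_weighted_sum (hs : ∀ i, 1 ≤ s i) (j : ι → ℕ) :
    ∑ i, (j i : ℝ) ≤ ∑ i, s i * j i :=
  sum_le_sum fun i _ => le_mul_of_one_le_left (by positivity) (hs i)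

lemma sub_one_mul_le_weighted_sum_sub_sum (hs : ∀ i, 1 ≤ s i) (j : ι → ℕ) (i : ι) :
    (s i - 1) * j i ≤ ∑ i, s i * j i - ∑ i, (j i : ℝ) := by
  rw [← sum_sub_distrib]
  simp_rw [← sub_one_mul]
  exact single_le_sum (f := fun i => (s i - 1) * (j i : ℝ))
    (fun i _ => mul_nonneg (sub_nonneg.2 (hs i)) (by positivity)) (mem_univ i)

variable [DecidableEq ι] {H : Finset ι} {ε : ℝ}

variable (s) in
noncomputable def weightedSimplex (m : ℕ) : Finset (ι → ℕ) :=
  {j ∈ Fintype.piFinset fun _ => range (m + 1) | ∑ i, s i * j i ≤ m}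

lemma mem_weightedSimplex (hs : ∀ i, 1 ≤ s i) {m : ℕ} {j : ι → ℕ} :
    j ∈ weightedSimplex s m ↔ ∑ i, s i * j i ≤ m := by
  refine ⟨fun hj => (mem_filter.1 hj).2, fun hj => mem_filter.2 ⟨?_, hj⟩⟩
  refine Fintype.mem_piFinset.2 fun i => mem_range.2 (Nat.lt_succ_of_le ?_)
  have : (j i : ℝ) ≤ ∑ i, (j i : ℝ) :=
    single_le_sum (f := fun i => (j i : ℝ)) (fun _ _ => by positivity) (mem_univ i)
  exact_mod_cast this.trans ((sum_le_weighted_sum hs j).trans hj)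

lemma tsum_ite_eq_sum_weightedSimplex (hs : ∀ i, 1 ≤ s i) (m : ℕ) :
    ∑' j : ι → ℕ, (if ∑ i, s i * j i ≤ m then (2 : ℝ) ^ (∑ i, j i) else 0) =
      ∑ j ∈ weightedSimplex s m, (2 : ℝ) ^ (∑ i, j i) := by
  rw [weightedSimplex, sum_filter]
  refine tsum_eq_sum fun j hj => if_neg fun hjm => hj ?_
  exact (mem_filter.1 ((mem_weightedSimplex hs).2 hjm)).1

lemma sum_eq_of_mem_piAntidiag {j : ι → ℕ} {m : ℕ} (hj : j ∈ piAntidiag H m) : ∑ i, j i = m := by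
  obtain ⟨hjm, hjH⟩ := mem_piAntidiag.1 hj
  rw [← hjm]
  exact (sum_subset (subset_univ H) fun i _ hi => by_contra fun h => hi (hjH i h)).symm

lemma piAntidiag_subset_weightedSimplex (hsH : ∀ i ∈ H, s i ≤ 1) (m : ℕ) :
    piAntidiag H m ⊆ weightedSimplex s m := by
  intro j hj
  have hjH := (mem_piAntidiag.1 hj).2
  have hsum := sum_eq_of_mem_piAntidiag hj
  refine mem_filter.2 ⟨Fintype.mem_piFinset.2 fun i => mem_range.2 (Nat.lt_succ_of_le ?_), ?_⟩
  · exact hsum ▸ single_le_sum (fun _ _ => Nat.zero_le _) (mem_univ i)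
  · calc ∑ i, s i * j i ≤ ∑ i, (j i : ℝ) := sum_le_sum fun i _ => by
          by_cases hi : i ∈ H
          · exact mul_le_of_le_one_left (by positivity) (hsH i hi)
          · simp [not_imp_comm.1 (hjH i) hi]
      _ = m := by exact_mod_cast hsum

lemma add_one_pow_div_factorial_mul_two_pow_le_sum_weightedSimplex (hH : H.Nonempty)
    (hsH : ∀ i ∈ H, s i ≤ 1) (m : ℕ) :
    ((m : ℝ) + 1) ^ (#H - 1) / (#H - 1).factorial * 2 ^ m ≤
      ∑ j ∈ weightedSimplex s m, (2 : ℝ) ^ (∑ i, j i) := by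
  have hcard : #(piAntidiag H m) = (#H - 1 + m).choose (#H - 1) := by
    rw [card_piAntidiag_nat, Nat.choose_symm_add, Nat.sub_add_comm hH.card_pos]
  have hchoose := Nat.pow_le_choose (α := ℝ) (#H - 1) (#H - 1 + m)
  rw [show #H - 1 + m + 1 - (#H - 1) = m + 1 by omega, ← hcard] at hchoose
  calc ((m : ℝ) + 1) ^ (#H - 1) / (#H - 1).factorial * 2 ^ m ≤ #(piAntidiag H m) * 2 ^ m := by
        gcongr
        exact_mod_cast hchoose
    _ = ∑ j ∈ piAntidiag H m, (2 : ℝ) ^ (∑ i, j i) := by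
        rw [← nsmul_eq_mul, ← sum_const]
        exact sum_congr rfl fun j hj => by rw [sum_eq_of_mem_piAntidiag hj]
    _ ≤ _ := sum_le_sum_of_subset_of_nonneg (piAntidiag_subset_weightedSimplex hsH m)
        fun _ _ _ => by positivity

lemma prod_erase_card_ite_range {i₀ : ι} (hi₀ : i₀ ∈ H) (a b : ℕ) :
    ∏ i ∈ univ.erase i₀, #(if i ∈ H then range a else range b) = a ^ (#H - 1) * b ^ #Hᶜ := by
  have hH : {i ∈ univ.erase i₀ | i ∈ H} = H.erase i₀ := by ext; simp [and_comm]
  have hT : {i ∈ univ.erase i₀ | i ∉ H} = Hᶜ := by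
    ext i; simp only [mem_filter, mem_erase, mem_univ, mem_compl]; grind
  simp only [apply_ite card, card_range]
  rw [prod_ite, prod_const, prod_const, hH, hT, card_erase_of_mem hi₀]

lemma mul_le_sub_sum_of_mem_weightedSimplex (hs : ∀ i, 1 ≤ s i) (hT : ∀ i ∉ H, 1 + ε ≤ s i)
    {m : ℕ} {j : ι → ℕ} (hj : j ∈ weightedSimplex s m) {i : ι} (hi : i ∉ H) :
    ε * j i ≤ m - ∑ i, (j i : ℝ) := by
  have hslack := sub_one_mul_le_weighted_sum_sub_sum hs j i
  have hjm := (mem_weightedSimplex hs).1 hj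
  have hεj : ε * j i ≤ (s i - 1) * j i :=
    mul_le_mul_of_nonneg_right (by linarith [hT i hi]) (by positivity)
  linarith

lemma div_add_one_le_one_div_add_one_mul {x : ℝ} (hε : 0 < ε) (hx : 0 ≤ x) :
    x / ε + 1 ≤ (1 / ε + 1) * (x + 1) := by
  have : 0 < 1 / ε := by positivity
  rw [div_eq_mul_one_div]
  nlinarith

lemma card_filter_sum_eq_weightedSimplex_le {i₀ : ι} (hi₀ : i₀ ∈ H) (hε : 0 < ε)
    (hs : ∀ i, 1 ≤ s i) (hT : ∀ i ∉ H, 1 + ε ≤ s i) {m n : ℕ} (hn : n ≤ m) :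
    (#{j ∈ weightedSimplex s m | ∑ i, j i = n} : ℝ) ≤
      ((m : ℝ) + 1) ^ (#H - 1) * ((1 / ε + 1) * (((m - n : ℕ) : ℝ) + 1)) ^ #Hᶜ := by
  set K := ⌊((m - n : ℕ) : ℝ) / ε⌋₊
  have hbox : {j ∈ weightedSimplex s m | ∑ i, j i = n} ⊆
      Fintype.piFinset fun i => if i ∈ H then range (m + 1) else range (K + 1) := by
    intro j hj
    obtain ⟨hjW, hjn⟩ := mem_filter.1 hj
    refine Fintype.mem_piFinset.2 fun i => ?_
    by_cases hi : i ∈ H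
    · simpa [hi] using Fintype.mem_piFinset.1 (mem_filter.1 hjW).1 i
    · simp only [hi, if_false, mem_range, Nat.lt_succ_iff]
      refine Nat.le_floor ((le_div_iff₀ hε).2 ?_)
      have := mul_le_sub_sum_of_mem_weightedSimplex hs hT hjW hi
      rw [Nat.cast_sub hn, ← hjn, Nat.cast_sum]
      linarith
  have hcard := (card_le_prod_erase_of_sum_eq i₀ hbox fun j hj => (mem_filter.1 hj).2).trans_eq
    (prod_erase_card_ite_range hi₀ (m + 1) (K + 1))
  calc (#{j ∈ weightedSimplex s m | ∑ i, j i = n} : ℝ) ≤ (m + 1) ^ (#H - 1) * (K + 1) ^ #Hᶜ := by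
        exact_mod_cast hcard
    _ ≤ _ := by
        gcongr
        calc (K : ℝ) + 1 ≤ ((m - n : ℕ) : ℝ) / ε + 1 := by
              gcongr
              exact Nat.floor_le (by positivity)
          _ ≤ _ := div_add_one_le_one_div_add_one_mul hε (by positivity)

lemma exists_sum_weightedSimplex_le {i₀ : ι} (hi₀ : i₀ ∈ H) (hε : 0 < ε)
    (hs : ∀ i, 1 ≤ s i) (hT : ∀ i ∉ H, 1 + ε ≤ s i) :
    ∃ C > 0, ∀ m : ℕ, ∑ j ∈ weightedSimplex s m, (2 : ℝ) ^ (∑ i, j i) ≤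
      C * ((m : ℝ) + 1) ^ (#H - 1) * 2 ^ m := by
  obtain ⟨G, hG, hGm⟩ := exists_sum_range_sub_add_one_pow_mul_two_pow_le #Hᶜ
  set E := 1 / ε + 1
  refine ⟨E ^ #Hᶜ * G, by positivity, fun m => ?_⟩
  have hmaps : ∀ j ∈ weightedSimplex s m, ∑ i, j i ∈ range (m + 1) := fun j hj => by
    have := (sum_le_weighted_sum hs j).trans ((mem_weightedSimplex hs).1 hj)
    exact mem_range.2 (Nat.lt_succ_of_le (by exact_mod_cast this))
  calc ∑ j ∈ weightedSimplex s m, (2 : ℝ) ^ (∑ i, j i)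
      = ∑ n ∈ range (m + 1), (#{j ∈ weightedSimplex s m | ∑ i, j i = n} : ℝ) * 2 ^ n := by
        rw [← sum_fiberwise_of_maps_to hmaps]
        refine sum_congr rfl fun n _ => ?_
        rw [sum_congr rfl fun j hj => by rw [(mem_filter.1 hj).2], sum_const, nsmul_eq_mul]
    _ ≤ ∑ n ∈ range (m + 1),
          ((m : ℝ) + 1) ^ (#H - 1) * (E * (((m - n : ℕ) : ℝ) + 1)) ^ #Hᶜ * 2 ^ n := by
        gcongr with n hn
        exact card_filter_sum_eq_weightedSimplex_le hi₀ hε hs hT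
          (Nat.lt_succ_iff.1 (mem_range.1 hn))
    _ = ((m : ℝ) + 1) ^ (#H - 1) * E ^ #Hᶜ *
          ∑ n ∈ range (m + 1), (((m - n : ℕ) : ℝ) + 1) ^ #Hᶜ * 2 ^ n := by
        rw [mul_sum]
        exact sum_congr rfl fun n _ => by rw [mul_pow]; ring
    _ ≤ ((m : ℝ) + 1) ^ (#H - 1) * E ^ #Hᶜ * (G * 2 ^ m) := by gcongr; exact hGm m
    _ = _ := by ring

end WeightedSimplex

theorem exists_bounds_tsum_two_pow_weighted {ι : Type*} [Fintype ι] [DecidableEq ι]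
    {s : ι → ℝ} {H : Finset ι} {ε : ℝ} (hH : H.Nonempty) (hsH : ∀ i ∈ H, s i = 1)
    (hε : 0 < ε) (hT : ∀ i ∉ H, 1 + ε ≤ s i) :
    ∃ c > (0 : ℝ), ∃ C > (0 : ℝ), ∀ m : ℕ, 1 ≤ m →
      c * (m : ℝ) ^ (#H - 1) * 2 ^ m ≤
        (∑' j : ι → ℕ, if ∑ i, s i * j i ≤ m then (2 : ℝ) ^ (∑ i, j i) else 0) ∧
      (∑' j : ι → ℕ, if ∑ i, s i * j i ≤ m then (2 : ℝ) ^ (∑ i, j i) else 0) ≤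
        C * (m : ℝ) ^ (#H - 1) * 2 ^ m := by
  have hs : ∀ i, 1 ≤ s i := fun i => by
    by_cases hi : i ∈ H
    · exact (hsH i hi).ge
    · linarith [hT i hi]
  obtain ⟨i₀, hi₀⟩ := hH
  obtain ⟨C, hC, hCm⟩ := exists_sum_weightedSimplex_le hi₀ hε hs hT
  refine ⟨1 / (#H - 1).factorial, by positivity, C * 2 ^ (#H - 1), by positivity, fun m hm => ?_⟩
  rw [tsum_ite_eq_sum_weightedSimplex hs]
  constructor
  · calc 1 / ((#H - 1).factorial : ℝ) * (m : ℝ) ^ (#H - 1) * 2 ^ m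
        ≤ ((m : ℝ) + 1) ^ (#H - 1) / (#H - 1).factorial * 2 ^ m := by
          rw [one_div_mul_eq_div]
          gcongr
          linarith
      _ ≤ _ := add_one_pow_div_factorial_mul_two_pow_le_sum_weightedSimplex ⟨i₀, hi₀⟩
          (fun i hi => (hsH i hi).le) m
  · calc _ ≤ C * ((m : ℝ) + 1) ^ (#H - 1) * 2 ^ m := hCm m
      _ ≤ C * (2 * m) ^ (#H - 1) * 2 ^ m := by
          gcongr
          linarith [(Nat.one_le_cast (α := ℝ)).2 hm]
      _ = C * 2 ^ (#H - 1) * (m : ℝ) ^ (#H - 1) * 2 ^ m := by rw [mul_pow]; ring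

theorem aniso_grid_cardinality_general (d μ : ℕ) (hd : 0 < d) (hμ1 : 1 ≤ μ) (hμd : μ ≤ d)
    (r : Fin d → ℝ) (h0 : 0 < r ⟨0, hd⟩)
    (heq : ∀ i : Fin d, (i : ℕ) < μ → r i = r ⟨0, hd⟩)
    (hbig : ∀ i : Fin d, μ ≤ (i : ℕ) → r ⟨0, hd⟩ < r i) :
    ∃ c > (0 : ℝ), ∃ C > (0 : ℝ), ∀ m : ℕ, 1 ≤ m →
      c * (m : ℝ) ^ (μ - 1) * 2 ^ m ≤
        (∑' j : Fin d → ℕ,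
          if (∑ i, r i * j i) / r ⟨0, hd⟩ ≤ (m : ℝ) then
            (2 : ℝ) ^ (∑ i, j i) else 0) ∧
      (∑' j : Fin d → ℕ,
          if (∑ i, r i * j i) / r ⟨0, hd⟩ ≤ (m : ℝ) then
            (2 : ℝ) ^ (∑ i, j i) else 0) ≤ C * (m : ℝ) ^ (μ - 1) * 2 ^ m := by
  set R := r ⟨0, hd⟩
  set H : Finset (Fin d) := {i | (i : ℕ) < μ}
  have hcard : #H = μ := by rw [Fin.card_filter_val_lt, min_eq_right hμd]
  have hsH : ∀ i ∈ H, r i / R = 1 := fun i hi => by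
    rw [heq i (mem_filter.1 hi).2, div_self h0.ne']
  obtain ⟨ε, hε, hT⟩ := exists_pos_add_le_of_forall_lt (p := fun i : Fin d => i ∉ H)
    (f := fun i => r i / R) (a := 1) fun i hi =>
      (one_lt_div h0).2 (hbig i (not_lt.1 fun h => hi (mem_filter.2 ⟨mem_univ i, h⟩)))
  have hdiv : ∀ j : Fin d → ℕ, (∑ i, r i * j i) / R = ∑ i, r i / R * j i := fun j => by
    rw [sum_div]
    exact sum_congr rfl fun i _ => by ring
  simp_rw [hdiv, ← hcard]
  exact exists_bounds_tsum_two_pow_weighted ⟨⟨0, hd⟩, mem_filter.2 ⟨mem_univ _, hμ1⟩⟩ hsH hε hT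

theorem aniso_grid_cardinality (d μ : ℕ) (hd : 0 < d) (hμ1 : 1 ≤ μ) (hμd : μ ≤ d)
    (r : Fin d → ℝ) (h0 : 0 < r ⟨0, hd⟩)
    (heq : ∀ i : Fin d, (i : ℕ) < μ → r i = r ⟨0, hd⟩)
    (hbig : ∀ i : Fin d, μ ≤ (i : ℕ) → r ⟨0, hd⟩ < r i)
    (hmono : ∀ i i' : Fin d, μ ≤ (i : ℕ) → i ≤ i' → r i ≤ r i') :
    ∃ c > (0 : ℝ), ∃ C > (0 : ℝ), ∀ m : ℕ, 1 ≤ m →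
      c * (m : ℝ) ^ (μ - 1) * 2 ^ m ≤
        (∑' j : Fin d → ℕ,
          if (∑ i, r i * j i) / r ⟨0, hd⟩ ≤ (m : ℝ) then
            (2 : ℝ) ^ (∑ i, j i) else 0) ∧
      (∑' j : Fin d → ℕ,
          if (∑ i, r i * j i) / r ⟨0, hd⟩ ≤ (m : ℝ) then
            (2 : ℝ) ^ (∑ i, j i) else 0) ≤ C * (m : ℝ) ^ (μ - 1) * 2 ^ m :=
  aniso_grid_cardinality_general d μ hd hμ1 hμd r h0 heq hbig
end
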